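/- Every vertex of degree at least 2 in an α-critical graph is contained in a cycle. -/

import Mathlib

open Finset
open scoped Classical

/-- The Fibonacci index: the number of independent (stable) sets of `G`,
including the empty set. -/
noncomputable def fibIndex {V : Type*} [Fintype V] (G : SimpleGraph V) : ℕ :=
  (Finset.univ.filter fun s : Finset V => ∀ a ∈ s, ∀ b ∈ s, ¬ G.Adj a b).card

/-- The independence (stability) number of `G`. -/
noncomputable def indepNum {V : Type*} [Fintype V] (G : SimpleGraph V) : ℕ :=
  (Finset.univ.filter fun s : Finset V => ∀ a ∈ s, ∀ b ∈ s, ¬ G.Adj a b).sup Finset.card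

/-- A graph is `α`-critical if deleting any edge strictly increases the
independence number (a graph with no edges is `α`-critical by convention). -/
noncomputable def AlphaCritical {V : Type*} [Fintype V] (G : SimpleGraph V) : Prop :=
  ∀ e ∈ G.edgeSet, indepNum G < indepNum (G.deleteEdges {e})

/-
Proof idea: if `v` lies on no cycle, every edge `va` at `v` is a bridge; let `A` be the component
of `a` in `G - va`, so that `va` is the only edge leaving `A`. By criticality of `va` and of a
second edge `vb` there are sets `S ∋ v, a` and `R ∋ v, b` of size `> α(G)` whose only edges
are `va`, resp. `vb`. Exchanging their parts inside `A` gives the independent sets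
`(S ∩ A) ∪ (R \ A) - v` and `(R ∩ A) ∪ (S \ A)` of total size `≥ 2α(G) + 1`, which is
impossible.
-/

namespace SimpleGraph

variable {V : Type*} {G : SimpleGraph V}

theorem IsIndepSet.union {s t : Set V} (hs : G.IsIndepSet s) (ht : G.IsIndepSet t)
    (hst : ∀ x ∈ s, ∀ y ∈ t, ¬ G.Adj x y) : G.IsIndepSet (s ∪ t) :=
  Set.pairwise_union.2
    ⟨hs, ht, fun x hx y hy _ ↦ ⟨hst x hx y hy, fun hadj ↦ hst x hx y hy hadj.symm⟩⟩

theorem IsIndepSet.of_deleteEdges_singleton {s : Set V} {e : Sym2 V} {z : V}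
    (hs : (G.deleteEdges {e}).IsIndepSet s) (hze : z ∈ e) (hzs : z ∉ s) : G.IsIndepSet s := by
  intro x hx y hy hxy hadj
  refine hs hx hy hxy (deleteEdges_adj.2 ⟨hadj, ?_⟩)
  rintro rfl
  rcases Sym2.mem_iff.1 hze with rfl | rfl <;> contradiction

theorem isBridge_of_forall_not_isCycle {v a : V} (hva : G.Adj v a)
    (h : ∀ c : G.Walk v v, ¬ c.IsCycle) : G.IsBridge s(v, a) := by
  rw [isBridge_iff_forall_cycle_notMem hva]
  intro u c hc he
  exact h _ (hc.rotate (c.fst_mem_support_of_mem_edges he))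

theorem IsBridge.eq_of_adj_of_reachable {v a x y : V} (hbr : G.IsBridge s(v, a))
    (hxy : G.Adj x y) (hx : (G.deleteEdges {s(v, a)}).Reachable a x)
    (hy : ¬ (G.deleteEdges {s(v, a)}).Reachable a y) : x = a ∧ y = v := by
  have hedge : s(x, y) = s(v, a) := by
    by_contra hne
    exact hy (hx.trans (deleteEdges_adj.2 ⟨hxy, hne⟩).reachable)
  rcases Sym2.eq_iff.1 hedge with ⟨rfl, rfl⟩ | ⟨rfl, rfl⟩
  · exact absurd hx.symm (isBridge_iff.1 hbr)
  · exact ⟨rfl, rfl⟩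

end SimpleGraph

section
variable {V : Type*} [Fintype V] {G : SimpleGraph V}

theorem card_le_indepNum {s : Finset V} (hs : G.IsIndepSet s) : s.card ≤ indepNum G :=
  le_sup (mem_filter.2 ⟨mem_univ _, fun _ ha _ hb hab ↦ hs ha hb (G.ne_of_adj hab) hab⟩)

theorem exists_isIndepSet_of_lt_indepNum {n : ℕ} (h : n < indepNum G) :
    ∃ s : Finset V, G.IsIndepSet s ∧ n < s.card := by
  obtain ⟨s, hs, hn⟩ := Finset.lt_sup_iff.1 h
  exact ⟨s, fun a ha b hb _ ↦ (mem_filter.1 hs).2 a ha b hb, hn⟩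

theorem AlphaCritical.exists_isIndepSet_deleteEdges (hG : AlphaCritical G) {x y : V}
    (hxy : G.Adj x y) : ∃ s : Finset V, (G.deleteEdges {s(x, y)}).IsIndepSet s ∧
      indepNum G < s.card ∧ x ∈ s ∧ y ∈ s := by
  obtain ⟨s, hs, hcard⟩ := exists_isIndepSet_of_lt_indepNum (hG _ (G.mem_edgeSet.2 hxy))
  have hmem : ∀ z ∈ s(x, y), z ∈ s := fun z hz ↦ by
    by_contra hzs
    exact (card_le_indepNum (hs.of_deleteEdges_singleton hz hzs)).not_gt hcard
  exact ⟨s, hs, hcard, hmem x (Sym2.mem_mk_left x y), hmem y (Sym2.mem_mk_right x y)⟩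

theorem AlphaCritical.eq_of_sole_crossing_edge (hG : AlphaCritical G) {p : V → Prop} {v a b : V}
    (hpa : p a) (hpv : ¬ p v) (hcut : ∀ x y, G.Adj x y → p x → ¬ p y → x = a ∧ y = v)
    (hva : G.Adj v a) (hvb : G.Adj v b) : b = a := by
  by_contra hba
  obtain ⟨S, hS, hSc, -, -⟩ := hG.exists_isIndepSet_deleteEdges hva
  obtain ⟨R, hR, hRc, hvR, -⟩ := hG.exists_isIndepSet_deleteEdges hvb
  have haR : a ∉ R := fun haR ↦ hR hvR haR hva.ne <| SimpleGraph.deleteEdges_adj.2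
    ⟨hva, fun h ↦ hba (Sym2.congr_right.1 (Set.mem_singleton_iff.1 h)).symm⟩
  have hT₁ : G.IsIndepSet ↑(S.filter p ∪ (R.filter (¬ p ·)).erase v) := by
    rw [coe_union]
    refine SimpleGraph.IsIndepSet.union
      (.of_deleteEdges_singleton (hS.mono (filter_subset _ _)) (Sym2.mem_mk_left v a)
        fun h ↦ hpv (mem_filter.1 h).2)
      (.of_deleteEdges_singleton (hR.mono ((erase_subset _ _).trans (filter_subset _ _)))
        (Sym2.mem_mk_left v b) (notMem_erase v _)) ?_
    intro x hx y hy hxy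
    obtain ⟨hyv, hy⟩ := mem_erase.1 hy
    exact hyv (hcut x y hxy (mem_filter.1 hx).2 (mem_filter.1 hy).2).2
  have hT₂ : G.IsIndepSet ↑(R.filter p ∪ S.filter (¬ p ·)) := by
    rw [coe_union]
    refine SimpleGraph.IsIndepSet.union
      (.of_deleteEdges_singleton (hR.mono (filter_subset _ _)) (Sym2.mem_mk_left v b)
        fun h ↦ hpv (mem_filter.1 h).2)
      (.of_deleteEdges_singleton (hS.mono (filter_subset _ _)) (Sym2.mem_mk_right v a)
        fun h ↦ (mem_filter.1 h).2 hpa) ?_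
    intro x hx y hy hxy
    obtain ⟨rfl, -⟩ := hcut x y hxy (mem_filter.1 hx).2 (mem_filter.1 hy).2
    exact haR (mem_filter.1 hx).1
  have h₁ := card_le_indepNum hT₁
  have h₂ := card_le_indepNum hT₂
  rw [card_union_of_disjoint ((disjoint_filter_filter_not S R p).mono_right (erase_subset _ _)),
    card_erase_of_mem (mem_filter.2 ⟨hvR, hpv⟩)] at h₁
  rw [card_union_of_disjoint (disjoint_filter_filter_not R S p)] at h₂
  have := card_filter_add_card_filter_not (s := S) p
  have := card_filter_add_card_filter_not (s := R) p
  omega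

theorem AlphaCritical.eq_of_isBridge (hG : AlphaCritical G) {v a b : V}
    (hbr : G.IsBridge s(v, a)) (hva : G.Adj v a) (hvb : G.Adj v b) : b = a :=
  hG.eq_of_sole_crossing_edge (p := (G.deleteEdges {s(v, a)}).Reachable a) .rfl
    (fun h ↦ SimpleGraph.isBridge_iff.1 hbr h.symm)
    (fun _ _ hxy hx hy ↦ hbr.eq_of_adj_of_reachable hxy hx hy) hva hvb

end

theorem stmt_13 {V : Type*} [Fintype V] {G : SimpleGraph V} [DecidableRel G.Adj]
    (hcrit : AlphaCritical G) (v : V) (hdeg : 2 ≤ G.degree v) :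
    ∃ c : G.Walk v v, c.IsCycle := by
  by_contra! hnc
  obtain ⟨a, ha, b, hb, hab⟩ := one_lt_card.1 hdeg
  rw [SimpleGraph.mem_neighborFinset] at ha hb
  exact hab (hcrit.eq_of_isBridge (SimpleGraph.isBridge_of_forall_not_isCycle ha hnc) ha hb).symm
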